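/- If there exists a restricted-sum-dominant set of integers of cardinality k ≥ 2, then for every integer n ≥ k there exist infinitely many restricted-sum-dominant sets of integers of cardinality k^n + 1. -/

import Mathlib

open Finset
open scoped Pointwise

/-- The restricted sumset `A ∔ A = {a + b : a, b ∈ A, a ≠ b}`. -/
def rsum (A : Finset ℤ) : Finset ℤ :=
  ((A ×ˢ A).filter fun p => p.1 ≠ p.2).image fun p => p.1 + p.2

lemma mem_rsum' {A : Finset ℤ} {x : ℤ} :
    x ∈ rsum A ↔ ∃ a ∈ A, ∃ b ∈ A, a ≠ b ∧ a + b = x := by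
  simp only [rsum, mem_image, mem_filter, mem_product, Prod.exists]
  constructor
  · rintro ⟨a, b, ⟨⟨ha, hb⟩, hne⟩, rfl⟩; exact ⟨a, ha, b, hb, hne, rfl⟩
  · rintro ⟨a, ha, b, hb, hne, rfl⟩; exact ⟨a, b, ⟨⟨ha, hb⟩, hne⟩, rfl⟩

lemma rsum_mono' {A B : Finset ℤ} (h : A ⊆ B) : rsum A ⊆ rsum B := by
  intro x hx
  rw [mem_rsum'] at hx ⊢
  obtain ⟨a, ha, b, hb, hne, rfl⟩ := hx
  exact ⟨a, h ha, b, h hb, hne, rfl⟩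

lemma digits_zero' (C b : ℤ) (hC : 0 ≤ C) (hb : 2*C + 1 ≤ b) :
    ∀ (n : ℕ) (c : ℕ → ℤ), (∀ i < n, |c i| ≤ C) →
      (∑ i ∈ Finset.range n, c i * b^i) = 0 → ∀ i < n, c i = 0 := by
  intro n
  induction n with
  | zero => intro c _ _ i hi; omega
  | succ n ih =>
    intro c hbd hsum i hi
    rw [Finset.sum_range_succ'] at hsum
    have hre : ∑ i ∈ Finset.range n, c (i+1) * b^(i+1)
        = b * ∑ i ∈ Finset.range n, c (i+1) * b^i := by
      rw [Finset.mul_sum]; apply Finset.sum_congr rfl; intro j _; ring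
    rw [hre] at hsum
    have hc0 : c 0 = 0 := by
      have hdvd : b ∣ c 0 := ⟨-(∑ i ∈ Finset.range n, c (i+1) * b^i), by
        simp only [pow_zero, mul_one] at hsum; linarith⟩
      have := hbd 0 (Nat.succ_pos n)
      exact Int.eq_zero_of_abs_lt_dvd hdvd (by linarith)
    have hT : ∑ i ∈ Finset.range n, c (i+1) * b^i = 0 := by
      simp only [hc0, pow_zero, mul_one, zero_mul, add_zero] at hsum
      have hbne : b ≠ 0 := by intro h; omega
      exact (mul_eq_zero.mp hsum).resolve_left hbne
    rcases Nat.eq_zero_or_pos i with rfl | hpos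
    · exact hc0
    · obtain ⟨j, rfl⟩ := Nat.exists_eq_add_of_lt hpos
      have := ih (fun i => c (i+1)) (fun i hi => hbd (i+1) (by omega)) hT j
      simpa using this (by omega)

noncomputable def rsdEval (b : ℤ) (n : ℕ) (v : Fin n → ℤ) : ℤ := ∑ i, v i * b ^ (i : ℕ)

noncomputable def rsdExpand (b : ℤ) (n : ℕ) (D : Finset ℤ) : Finset ℤ :=
  (Fintype.piFinset fun _ : Fin n => D).image (rsdEval b n)

lemma rsdEval_injOn (C b : ℤ) (hC : 0 ≤ C) (hb : 4*C+1 ≤ b) (D : Finset ℤ)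
    (hD : ∀ x ∈ D, |x| ≤ C) (n : ℕ) :
    Set.InjOn (rsdEval b n) (Fintype.piFinset fun _ : Fin n => D) := by
  intro v hv w hw heq
  rw [Finset.mem_coe, Fintype.mem_piFinset] at hv hw
  set c : ℕ → ℤ := fun i => if h : i < n then v ⟨i, h⟩ - w ⟨i, h⟩ else 0 with hc
  have hsum : ∑ i ∈ Finset.range n, c i * b ^ i = 0 := by
    have : ∀ j : Fin n, c (j : ℕ) * b ^ (j:ℕ) = v j * b^(j:ℕ) - w j * b^(j:ℕ) := by
      intro j; simp only [hc, dif_pos j.isLt]; ring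
    rw [← Fin.sum_univ_eq_sum_range (fun i => c i * b ^ i) n]
    simp only [this]
    rw [Finset.sum_sub_distrib]
    have : rsdEval b n v = rsdEval b n w := heq
    simp only [rsdEval] at this
    omega
  have hbd : ∀ i < n, |c i| ≤ 2*C := by
    intro i hi
    simp only [hc, dif_pos hi]
    have h1 := hD _ (hv ⟨i, hi⟩)
    have h2 := hD _ (hw ⟨i, hi⟩)
    rw [abs_le] at h1 h2 ⊢; omega
  have := digits_zero' (2*C) b (by linarith) (by linarith) n c hbd hsum
  funext j
  have := this j j.isLt
  simp only [hc, dif_pos j.isLt, Fin.eta] at this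
  omega

lemma rsdExpand_card (C b : ℤ) (hC : 0 ≤ C) (hb : 4*C+1 ≤ b) (D : Finset ℤ)
    (hD : ∀ x ∈ D, |x| ≤ C) (n : ℕ) : (rsdExpand b n D).card = D.card ^ n := by
  rw [rsdExpand, Finset.card_image_of_injOn (rsdEval_injOn C b hC hb D hD n),
    Fintype.card_piFinset]
  simp

lemma rsdExpand_bound (C b : ℤ) (hC : 0 ≤ C) (hb : 1 ≤ b) (D : Finset ℤ)
    (hD : ∀ x ∈ D, |x| ≤ C) (n : ℕ) :
    ∀ x ∈ rsdExpand b n D, |x| ≤ n * C * b ^ n := by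
  intro x hx
  rw [rsdExpand, Finset.mem_image] at hx
  obtain ⟨v, hv, rfl⟩ := hx
  rw [Fintype.mem_piFinset] at hv
  calc |rsdEval b n v| ≤ ∑ i : Fin n, |v i * b ^ (i:ℕ)| := Finset.abs_sum_le_sum_abs _ _
    _ ≤ ∑ _i : Fin n, C * b ^ n := by
        apply Finset.sum_le_sum
        intro i _
        rw [abs_mul, abs_pow, abs_of_nonneg (by linarith : (0:ℤ) ≤ b)]
        have h1 : |v i| ≤ C := hD _ (hv i)
        have h2 : b ^ (i:ℕ) ≤ b ^ n := pow_le_pow_right₀ hb (le_of_lt i.isLt)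
        have h3 : (0:ℤ) ≤ b ^ (i:ℕ) := pow_nonneg (by linarith) _
        nlinarith [abs_nonneg (v i)]
    _ = n * C * b ^ n := by simp [Finset.sum_const, mul_assoc]

lemma card_lt_card_sub' (A : Finset ℤ) (h2 : 2 ≤ A.card) : A.card < (A - A).card := by
  have hne : A.Nonempty := Finset.card_pos.mp (by omega)
  set m := A.min' hne with hm
  set Mx := A.max' hne with hMx
  have hmM : m < Mx := A.min'_lt_max'_of_card (by omega)
  set T := A.image (· - m) with hT
  have hTsub : T ⊆ A - A := by
    intro x hx
    rw [hT, Finset.mem_image] at hx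
    obtain ⟨a, ha, rfl⟩ := hx
    exact Finset.sub_mem_sub ha (A.min'_mem hne)
  have hTcard : T.card = A.card := Finset.card_image_of_injective _ (sub_left_injective)
  have hnotin : m - Mx ∉ T := by
    intro hmem
    rw [hT, Finset.mem_image] at hmem
    obtain ⟨a, ha, heq⟩ := hmem
    have := A.min'_le a ha
    omega
  have hins : insert (m - Mx) T ⊆ A - A := by
    rw [Finset.insert_subset_iff]
    exact ⟨Finset.sub_mem_sub (A.min'_mem hne) (A.max'_mem hne), hTsub⟩
  have := Finset.card_le_card hins
  rw [Finset.card_insert_of_notMem hnotin, hTcard] at this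
  omega

lemma pow_aux' (d : ℕ) : ∀ n : ℕ, d^(n+1) + (n+1) * d^n ≤ (d+1)^(n+1) := by
  intro n
  induction n with
  | zero => simp [pow_succ]
  | succ n ih =>
    have h : (d+1)^(n+1+1) = (d+1)^(n+1) * (d+1) := by ring
    rw [h]
    calc d^(n+1+1) + (n+1+1) * d^(n+1)
        ≤ d^(n+1+1) + (n+1+1) * d^(n+1) + (n+1) * d^n := Nat.le_add_right _ _
      _ = (d^(n+1) + (n+1) * d^n) * (d+1) := by ring
      _ ≤ (d+1)^(n+1) * (d+1) := Nat.mul_le_mul_right _ ih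

theorem stmt12 (k : ℕ) (hk : 2 ≤ k)
    (h : ∃ A : Finset ℤ, A.card = k ∧ (A - A).card < (rsum A).card) :
    ∀ n : ℕ, k ≤ n →
      {B : Finset ℤ | B.card = k ^ n + 1 ∧ (B - B).card < (rsum B).card}.Infinite := by
  intro n hn
  obtain ⟨A, hAcard, hAlt⟩ := h
  have hn2 : 2 ≤ n := le_trans hk hn
  have hA2 : 2 ≤ A.card := by omega
  have hAne : A.Nonempty := Finset.card_pos.mp (by omega)
  set M : ℤ := A.sup' hAne (fun a => |a|) with hMdef
  have hM : ∀ a ∈ A, |a| ≤ M := fun a ha => Finset.le_sup' _ ha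
  have hM0 : 0 ≤ M := by
    obtain ⟨a0, ha0⟩ := hAne
    exact le_trans (abs_nonneg a0) (hM a0 ha0)
  set C : ℤ := 4 * M with hCdef
  set b : ℤ := 16 * M + 1 with hbdef
  have hC0 : 0 ≤ C := by omega
  have hb4 : 4 * C + 1 ≤ b := by omega
  have hb1 : 1 ≤ b := by omega
  -- digit bounds
  have hDA : ∀ x ∈ A, |x| ≤ C := fun x hx => le_trans (hM x hx) (by omega)
  have hDsub : ∀ x ∈ A - A, |x| ≤ C := by
    intro x hx
    rw [Finset.mem_sub] at hx
    obtain ⟨u, hu, v, hv, rfl⟩ := hx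
    have := hM u hu; have := hM v hv
    rw [abs_le] at *
    omega
  have hDrsum : ∀ x ∈ rsum A, |x| ≤ C := by
    intro x hx
    rw [mem_rsum'] at hx
    obtain ⟨u, hu, v, hv, _, rfl⟩ := hx
    have := hM u hu; have := hM v hv
    rw [abs_le] at *
    omega
  set B : Finset ℤ := rsdExpand b n A with hBdef
  set d : ℕ := (A - A).card with hddef
  set s : ℕ := (rsum A).card with hsdef
  have hBcard : B.card = k ^ n := by
    rw [hBdef, rsdExpand_card C b hC0 hb4 A hDA n, hAcard]
  have hBne : B.Nonempty := by
    rw [← Finset.card_pos, hBcard]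
    exact pow_pos (by omega) n
  -- difference set bound
  have hBsub : B - B ⊆ rsdExpand b n (A - A) := by
    intro x hx
    rw [Finset.mem_sub] at hx
    obtain ⟨u, hu, v, hv, rfl⟩ := hx
    rw [hBdef, rsdExpand, Finset.mem_image] at hu hv
    obtain ⟨p, hp, rfl⟩ := hu
    obtain ⟨q, hq, rfl⟩ := hv
    rw [Fintype.mem_piFinset] at hp hq
    rw [rsdExpand, Finset.mem_image]
    refine ⟨fun i => p i - q i, ?_, ?_⟩
    · rw [Fintype.mem_piFinset]
      exact fun i => Finset.sub_mem_sub (hp i) (hq i)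
    · simp only [rsdEval, sub_mul, Finset.sum_sub_distrib]
  have hdiffcard : (B - B).card ≤ d ^ n := by
    have := Finset.card_le_card hBsub
    rwa [rsdExpand_card C b hC0 hb4 (A - A) hDsub n] at this
  -- rsum lower bound
  have hrsub : rsdExpand b n (rsum A) ⊆ rsum B := by
    intro x hx
    rw [rsdExpand, Finset.mem_image] at hx
    obtain ⟨c, hc, rfl⟩ := hx
    rw [Fintype.mem_piFinset] at hc
    have hex : ∀ i : Fin n, ∃ a ∈ A, ∃ b' ∈ A, a ≠ b' ∧ a + b' = c i :=
      fun i => mem_rsum'.mp (hc i)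
    choose p hp q hq hne hpq using hex
    have hpmem : p ∈ Fintype.piFinset fun _ : Fin n => A := by
      rw [Fintype.mem_piFinset]; exact hp
    have hqmem : q ∈ Fintype.piFinset fun _ : Fin n => A := by
      rw [Fintype.mem_piFinset]; exact hq
    rw [mem_rsum']
    refine ⟨rsdEval b n p, ?_, rsdEval b n q, ?_, ?_, ?_⟩
    · exact Finset.mem_image_of_mem _ hpmem
    · exact Finset.mem_image_of_mem _ hqmem
    · intro heq
      have := rsdEval_injOn C b hC0 hb4 A hDA n hpmem hqmem heq
      exact hne ⟨0, by omega⟩ (congrFun this ⟨0, by omega⟩)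
    · simp only [rsdEval, ← Finset.sum_add_distrib]
      apply Finset.sum_congr rfl
      intro i _
      rw [← hpq i]; ring
  have hrcard : s ^ n ≤ (rsum B).card := by
    have := Finset.card_le_card hrsub
    rwa [rsdExpand_card C b hC0 hb4 (rsum A) hDrsum n] at this
  -- element bound
  set R0 : ℤ := n * C * b ^ n with hR0def
  have hR00 : 0 ≤ R0 := by
    apply mul_nonneg (mul_nonneg (by positivity) hC0) (pow_nonneg (by omega) n)
  have hBbd : ∀ x ∈ B, |x| ≤ R0 := rsdExpand_bound C b hC0 hb1 A hDA n
  -- arithmetic inequality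
  have hdk : k + 1 ≤ d := by
    have := card_lt_card_sub' A hA2
    omega
  have hds : d + 1 ≤ s := by omega
  have harith : d ^ n + 2 * k ^ n < s ^ n + k ^ n := by
    obtain ⟨m, rfl⟩ : ∃ m, n = m + 1 := ⟨n - 1, by omega⟩
    have h1 : k ^ (m + 1) < (m + 1) * d ^ m := by
      have hkm : k ^ m < d ^ m := Nat.pow_lt_pow_left (by omega) (by omega)
      calc k ^ (m + 1) = k * k ^ m := by ring
        _ ≤ (m + 1) * k ^ m := Nat.mul_le_mul_right _ (by omega)
        _ < (m + 1) * d ^ m := by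
            exact Nat.mul_lt_mul_of_le_of_lt (le_refl _) hkm (by omega)
    have h2 : d ^ (m+1) + (m+1) * d ^ m ≤ (d+1) ^ (m+1) := pow_aux' d m
    have h3 : (d+1) ^ (m+1) ≤ s ^ (m+1) := Nat.pow_le_pow_left hds _
    linarith
  -- the key construction
  have key : ∀ z : ℤ, 10 * R0 + 10 ≤ z →
      (insert z B).card = k ^ n + 1 ∧
      ((insert z B) - (insert z B)).card < (rsum (insert z B)).card := by
    intro z hz
    have hzB : z ∉ B := by
      intro hmem
      have := hBbd z hmem
      rw [abs_le] at this
      omega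
    constructor
    · rw [Finset.card_insert_of_notMem hzB, hBcard]
    · -- difference upper bound
      have hdiffsub : (insert z B) - (insert z B) ⊆
          (B - B) ∪ B.image (fun x => z - x) ∪ B.image (fun x => x - z) := by
        intro w hw
        rw [Finset.mem_sub] at hw
        obtain ⟨x, hx, y, hy, rfl⟩ := hw
        rw [Finset.mem_insert] at hx hy
        rcases hx with rfl | hx <;> rcases hy with rfl | hy
        · apply Finset.mem_union_left; apply Finset.mem_union_left
          obtain ⟨a0, ha0⟩ := hBne
          have h0 := Finset.sub_mem_sub ha0 ha0
          simpa using h0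
        · apply Finset.mem_union_left; apply Finset.mem_union_right
          exact Finset.mem_image_of_mem _ hy
        · apply Finset.mem_union_right
          exact Finset.mem_image_of_mem _ hx
        · apply Finset.mem_union_left; apply Finset.mem_union_left
          exact Finset.sub_mem_sub hx hy
      have hdiffb : ((insert z B) - (insert z B)).card ≤ d ^ n + k ^ n + k ^ n := by
        calc ((insert z B) - (insert z B)).card
            ≤ ((B - B) ∪ B.image (fun x => z - x) ∪ B.image (fun x => x - z)).card :=
              Finset.card_le_card hdiffsub
          _ ≤ ((B - B) ∪ B.image (fun x => z - x)).card + (B.image (fun x => x - z)).card :=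
              Finset.card_union_le _ _
          _ ≤ (B - B).card + (B.image (fun x => z - x)).card + (B.image (fun x => x - z)).card := by
              have := Finset.card_union_le (B - B) (B.image (fun x => z - x))
              omega
          _ ≤ d ^ n + k ^ n + k ^ n := by
              have h1 := Finset.card_image_le (s := B) (f := fun x => z - x)
              have h2 := Finset.card_image_le (s := B) (f := fun x => x - z)
              rw [hBcard] at h1 h2
              omega
      -- rsum lower bound
      have hrsub2 : rsum B ∪ B.image (fun x => z + x) ⊆ rsum (insert z B) := by
        apply Finset.union_subset
        · exact rsum_mono' (Finset.subset_insert z B)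
        · intro w hw
          rw [Finset.mem_image] at hw
          obtain ⟨x, hx, rfl⟩ := hw
          rw [mem_rsum']
          exact ⟨z, Finset.mem_insert_self _ _, x, Finset.mem_insert_of_mem hx,
            fun heq => hzB (heq ▸ hx), rfl⟩
      have hdisj : Disjoint (rsum B) (B.image (fun x => z + x)) := by
        rw [Finset.disjoint_left]
        intro w hw hw2
        have hwb : |w| ≤ 2 * R0 := by
          rw [mem_rsum'] at hw
          obtain ⟨u, hu, v, hv, _, rfl⟩ := hw
          have := hBbd u hu; have := hBbd v hv
          rw [abs_le] at *
          omega
        rw [Finset.mem_image] at hw2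
        obtain ⟨x, hx, rfl⟩ := hw2
        have := hBbd x hx
        rw [abs_le] at hwb this
        omega
      have hrb : s ^ n + k ^ n ≤ (rsum (insert z B)).card := by
        have hcu : (rsum B ∪ B.image (fun x => z + x)).card
            = (rsum B).card + (B.image (fun x => z + x)).card :=
          Finset.card_union_of_disjoint hdisj
        have himg : (B.image (fun x => z + x)).card = k ^ n := by
          rw [Finset.card_image_of_injective _ (add_right_injective z), hBcard]
        have := Finset.card_le_card hrsub2
        omega
      omega
  -- infinitude
  apply Set.infinite_of_injective_forall_mem
    (f := fun j : ℕ => insert (10 * R0 + 10 + j) B)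
  · intro j1 j2 heq
    have heq' : insert (10 * R0 + 10 + (j1:ℤ)) B = insert (10 * R0 + 10 + (j2:ℤ)) B := heq
    have h1 : (10 * R0 + 10 + (j1:ℤ)) ∈ insert (10 * R0 + 10 + (j2:ℤ)) B := by
      rw [← heq']; exact Finset.mem_insert_self _ _
    rw [Finset.mem_insert] at h1
    rcases h1 with h1 | h1
    · exact_mod_cast by omega
    · exfalso
      have := hBbd _ h1
      rw [abs_le] at this
      have : (0:ℤ) ≤ j1 := Int.ofNat_nonneg j1
      omega
  · intro j
    have hz : 10 * R0 + 10 ≤ 10 * R0 + 10 + (j:ℤ) := by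
      have : (0:ℤ) ≤ j := Int.ofNat_nonneg j
      omega
    obtain ⟨hc, hlt⟩ := key _ hz
    exact ⟨hc, hlt⟩
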